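/- arXiv:1110.5115 — 5 statements merged into one kernel-verified Lean document; each statement's English description precedes it below -/
import Mathlib

section
/- If smooth real-valued functions R₁, R₂, R on a manifold satisfy the directional derivative relations d(R) = R₁ α¹ + R₂ α² (i.e. R₃ = 0), R₁₁ = 1 - R - R₁², R₁₂ = R₂₁ = -R₁R₂, R₂₂ = 1 - R - R₂² (with derivatives taken with respect to a coframe α), then the function (R₁² + R₂² + R - 3/2) e^{2(R-1)} is constant, i.e. its exterior derivative vanishes. -/
noncomputable section

/-- The model 3-manifold. -/
abbrev E3 := EuclideanSpace ℝ (Fin 3)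

/-- Exterior derivative of a one-form on `E3`, evaluated on constant vectors. -/
def dOne (ω : E3 → (E3 →L[ℝ] ℝ)) (x u v : E3) : ℝ :=
  fderiv ℝ (fun y => ω y v) x u - fderiv ℝ (fun y => ω y u) x v

/-- Wedge product of two one-forms, evaluated pointwise. -/
def wdg (η τ : E3 → (E3 →L[ℝ] ℝ)) (x u v : E3) : ℝ :=
  η x u * τ x v - η x v * τ x u

/-- Lie bracket of vector fields on `E3`. -/
def brkt (X Y : E3 → E3) (x : E3) : E3 :=
  fderiv ℝ Y x (X x) - fderiv ℝ X x (Y x)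

lemma aux_dsq (f : E3 → ℝ) (hf : ContDiff ℝ (⊤ : ℕ∞) f) (x u v : E3) :
    fderiv ℝ (fun y => fderiv ℝ f y v) x u = fderiv ℝ (fun y => fderiv ℝ f y u) x v := by
  have hdf : DifferentiableAt ℝ (fderiv ℝ f) x :=
    ((hf.fderiv_right (m := (⊤ : ℕ∞)) (by simp)).differentiable (by simp)) x
  have key : ∀ w : E3, fderiv ℝ (fun y => fderiv ℝ f y w) x
      = (fderiv ℝ (fderiv ℝ f) x).flip w := by
    intro w
    rw [fderiv_clm_apply hdf (differentiableAt_const w)]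
    simp
  rw [key, key]
  exact hf.contDiffAt.isSymmSndFDerivAt (by rw [minSmoothness_of_isRCLikeNormedField]; exact WithTop.coe_le_coe.mpr le_top) u v

lemma aux_basis (β1 β2 β3 : E3 →L[ℝ] ℝ) (a1 a2 a3 : E3)
    (h11 : β1 a1 = 1) (h12 : β1 a2 = 0) (h13 : β1 a3 = 0)
    (h21 : β2 a1 = 0) (h22 : β2 a2 = 1) (h23 : β2 a3 = 0)
    (h31 : β3 a1 = 0) (h32 : β3 a2 = 0) (h33 : β3 a3 = 1)
    (v : E3) : v = β1 v • a1 + β2 v • a2 + β3 v • a3 := by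
  set S : E3 →ₗ[ℝ] (Fin 3 → ℝ) :=
    LinearMap.pi (fun i => (![(β1 : E3 →ₗ[ℝ] ℝ), (β2 : E3 →ₗ[ℝ] ℝ), (β3 : E3 →ₗ[ℝ] ℝ)] i)) with hS
  have hsurj : Function.Surjective S := by
    intro c
    refine ⟨c 0 • a1 + c 1 • a2 + c 2 • a3, ?_⟩
    funext i
    fin_cases i <;>
      simp [hS, LinearMap.pi_apply, h11, h12, h13, h21, h22, h23, h31, h32, h33]
  have hinj : Function.Injective S :=
    (LinearMap.injective_iff_surjective_of_finrank_eq_finrank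
      (by simp [finrank_euclideanSpace])).mpr hsurj
  apply hinj
  funext i
  fin_cases i <;>
    simp [hS, LinearMap.pi_apply, h11, h12, h13, h21, h22, h23, h31, h32, h33]

lemma aux_dOne_add (ω τ : E3 → (E3 →L[ℝ] ℝ)) (hω : ContDiff ℝ (⊤ : ℕ∞) ω) (hτ : ContDiff ℝ (⊤ : ℕ∞) τ)
    (x u v : E3) :
    dOne (fun y => ω y + τ y) x u v = dOne ω x u v + dOne τ x u v := by
  have hωw : ∀ w : E3, DifferentiableAt ℝ (fun y => ω y w) x := fun w =>
    ((hω.differentiable (by simp)) x).clm_apply (differentiableAt_const w)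
  have hτw : ∀ w : E3, DifferentiableAt ℝ (fun y => τ y w) x := fun w =>
    ((hτ.differentiable (by simp)) x).clm_apply (differentiableAt_const w)
  have h : ∀ w : E3, fderiv ℝ (fun y => (ω y + τ y) w) x
      = fderiv ℝ (fun y => ω y w) x + fderiv ℝ (fun y => τ y w) x := by
    intro w
    have : (fun y => (ω y + τ y) w) = fun y => ω y w + τ y w := rfl
    rw [this, fderiv_fun_add (hωw w) (hτw w)]
  unfold dOne
  rw [h u, h v]
  simp
  ring

lemma aux_dOne_smul (f : E3 → ℝ) (ω : E3 → (E3 →L[ℝ] ℝ))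
    (hf : ContDiff ℝ (⊤ : ℕ∞) f) (hω : ContDiff ℝ (⊤ : ℕ∞) ω) (x u v : E3) :
    dOne (fun y => f y • ω y) x u v
      = fderiv ℝ f x u * ω x v - fderiv ℝ f x v * ω x u + f x * dOne ω x u v := by
  have hωw : ∀ w : E3, DifferentiableAt ℝ (fun y => ω y w) x := fun w =>
    ((hω.differentiable (by simp)) x).clm_apply (differentiableAt_const w)
  have hfd : DifferentiableAt ℝ f x := (hf.differentiable (by simp)) x
  have h : ∀ w : E3, fderiv ℝ (fun y => (f y • ω y) w) x
      = f x • fderiv ℝ (fun y => ω y w) x + (ω x w) • fderiv ℝ f x := by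
    intro w
    have : (fun y => (f y • ω y) w) = fun y => f y * ω y w := rfl
    rw [this, fderiv_fun_mul hfd (hωw w)]
  unfold dOne
  rw [h u, h v]
  simp
  ring

/-- if smooth functions `R, R₁, R₂` on a 3-manifold carrying an
R-Cartan structure `α` satisfy `dR = R₁α¹ + R₂α²` (i.e. `R₃ = 0`),
`R₁₁ = 1 - R - R₁²`, `R₁₂ = R₂₁ = -R₁R₂`, `R₂₂ = 1 - R - R₂²`, then
`(R₁² + R₂² + R - 3/2) e^{2(R-1)}` is constant: its exterior derivative
vanishes. -/
theorem stmt_2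
    (α1 α2 α3 : E3 → (E3 →L[ℝ] ℝ)) (e1 e2 e3 : E3 → E3)
    (R R1 R2 : E3 → ℝ)
    (hα1 : ContDiff ℝ (⊤ : ℕ∞) α1) (hα2 : ContDiff ℝ (⊤ : ℕ∞) α2) (hα3 : ContDiff ℝ (⊤ : ℕ∞) α3)
    (he1 : ContDiff ℝ (⊤ : ℕ∞) e1) (he2 : ContDiff ℝ (⊤ : ℕ∞) e2) (he3 : ContDiff ℝ (⊤ : ℕ∞) e3)
    (hR : ContDiff ℝ (⊤ : ℕ∞) R) (hR1 : ContDiff ℝ (⊤ : ℕ∞) R1) (hR2 : ContDiff ℝ (⊤ : ℕ∞) R2)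
    (hdual : ∀ x, α1 x (e1 x) = 1 ∧ α1 x (e2 x) = 0 ∧ α1 x (e3 x) = 0 ∧
      α2 x (e1 x) = 0 ∧ α2 x (e2 x) = 1 ∧ α2 x (e3 x) = 0 ∧
      α3 x (e1 x) = 0 ∧ α3 x (e2 x) = 0 ∧ α3 x (e3 x) = 1)
    (hs1 : ∀ x u v, dOne α1 x u v = wdg α2 α3 x u v)
    (hs2 : ∀ x u v, dOne α2 x u v = - wdg α1 α3 x u v)
    (hs3 : ∀ x u v, dOne α3 x u v = R x * wdg α1 α2 x u v)
    -- dR = R₁ α¹ + R₂ α²  (in particular R₃ = 0)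
    (hdR : ∀ x, (fderiv ℝ R x : E3 →L[ℝ] ℝ) = R1 x • α1 x + R2 x • α2 x)
    -- the listed second-order relations, w.r.t. the coframe α
    (hR11 : ∀ x, fderiv ℝ R1 x (e1 x) = 1 - R x - (R1 x)^2)
    (hR12 : ∀ x, fderiv ℝ R1 x (e2 x) = -(R1 x * R2 x))
    (hR21 : ∀ x, fderiv ℝ R2 x (e1 x) = -(R1 x * R2 x))
    (hR22 : ∀ x, fderiv ℝ R2 x (e2 x) = 1 - R x - (R2 x)^2) :
    ∀ x, fderiv ℝ
      (fun y => ((R1 y)^2 + (R2 y)^2 + R y - 3/2) * Real.exp (2*(R y - 1))) x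
      = 0 := by
  intro x
  obtain ⟨d11, d12, d13, d21, d22, d23, d31, d32, d33⟩ := hdual x
  -- d² R = 0
  have hfun : (fun y => (fderiv ℝ R y : E3 →L[ℝ] ℝ))
      = fun y => R1 y • α1 y + R2 y • α2 y := funext hdR
  have key : ∀ u v : E3,
      (fderiv ℝ R1 x u * α1 x v - fderiv ℝ R1 x v * α1 x u + R1 x * dOne α1 x u v)
      + (fderiv ℝ R2 x u * α2 x v - fderiv ℝ R2 x v * α2 x u + R2 x * dOne α2 x u v)
      = 0 := by
    intro u v
    have h0 : dOne (fun y => (fderiv ℝ R y : E3 →L[ℝ] ℝ)) x u v = 0 := by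
      unfold dOne
      rw [aux_dsq R hR x u v, sub_self]
    rw [hfun] at h0
    rw [aux_dOne_add (fun y => R1 y • α1 y) (fun y => R2 y • α2 y)
      (hR1.smul hα1) (hR2.smul hα2) x u v,
      aux_dOne_smul R1 α1 hR1 hα1 x u v, aux_dOne_smul R2 α2 hR2 hα2 x u v] at h0
    linarith [h0]
  -- third directional derivatives of R1, R2
  have h13 : fderiv ℝ R1 x (e3 x) = -R2 x := by
    have h := key (e1 x) (e3 x)
    rw [hs1, hs2] at h
    unfold wdg at h
    rw [d11, d13, d21, d23, d31, d33] at h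
    linarith [h]
  have h23 : fderiv ℝ R2 x (e3 x) = R1 x := by
    have h := key (e2 x) (e3 x)
    rw [hs1, hs2] at h
    unfold wdg at h
    rw [d12, d13, d22, d23, d32, d33] at h
    linarith [h]
  -- evaluate fderiv R
  have hRe : ∀ w : E3, fderiv ℝ R x w = R1 x * α1 x w + R2 x * α2 x w := by
    intro w
    rw [hdR x]
    simp
  -- derivative of the full expression
  have hRd : HasFDerivAt R (fderiv ℝ R x) x := ((hR.differentiable (by simp)) x).hasFDerivAt
  have h1d : HasFDerivAt R1 (fderiv ℝ R1 x) x := ((hR1.differentiable (by simp)) x).hasFDerivAt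
  have h2d : HasFDerivAt R2 (fderiv ℝ R2 x) x := ((hR2.differentiable (by simp)) x).hasFDerivAt
  have hg := (((h1d.fun_mul h1d).fun_add (h2d.fun_mul h2d)).fun_add hRd).sub_const (3/2 : ℝ)
  have hE := ((hRd.sub_const (1 : ℝ)).const_mul (2 : ℝ)).exp
  have hF := hg.fun_mul hE
  have hfeq : (fun y => ((R1 y)^2 + (R2 y)^2 + R y - 3/2) * Real.exp (2*(R y - 1)))
      = fun y => ((R1 y * R1 y + R2 y * R2 y + R y) - 3/2) * Real.exp (2 * (R y - 1)) := by
    funext y; ring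
  rw [hfeq, hF.fderiv]
  ext v
  -- expand v in the frame
  have hR1v : fderiv ℝ R1 x v = α1 x v * (1 - R x - (R1 x)^2)
      + α2 x v * (-(R1 x * R2 x)) + α3 x v * (-R2 x) := by
    conv_lhs => rw [aux_basis (α1 x) (α2 x) (α3 x) (e1 x) (e2 x) (e3 x)
      d11 d12 d13 d21 d22 d23 d31 d32 d33 v]
    rw [map_add, map_add, map_smul, map_smul, map_smul, hR11 x, hR12 x, h13]
    simp [smul_eq_mul]
  have hR2v : fderiv ℝ R2 x v = α1 x v * (-(R1 x * R2 x))
      + α2 x v * (1 - R x - (R2 x)^2) + α3 x v * (R1 x) := by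
    conv_lhs => rw [aux_basis (α1 x) (α2 x) (α3 x) (e1 x) (e2 x) (e3 x)
      d11 d12 d13 d21 d22 d23 d31 d32 d33 v]
    rw [map_add, map_add, map_smul, map_smul, map_smul, hR21 x, hR22 x, h23]
    simp [smul_eq_mul]
  simp only [ContinuousLinearMap.add_apply, ContinuousLinearMap.smul_apply,
    ContinuousLinearMap.zero_apply, smul_eq_mul, ContinuousLinearMap.coe_smul',
    Pi.smul_apply]
  rw [hR1v, hR2v, hRe v]
  ring
end
end

section
/- For an (I,J,1)-generalized Finsler structure with dual frame (ê₁, ê₂, ê₃), the Lie derivative along ê₂ of the symmetric quadratic form (ω¹)² + (ω³)² vanishes. -/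
noncomputable section

/-- Derivative of pointwise application at a fixed vector. -/
lemma fderiv_apply_const (ω : E3 → (E3 →L[ℝ] ℝ)) (hω : Differentiable ℝ ω)
    (x u v : E3) : fderiv ℝ (fun y => ω y v) x u = fderiv ℝ ω x u v := by
  have h := fderiv_clm_apply (hω x) (differentiableAt_const v)
  have : fderiv ℝ (fun y => ω y v) x = fderiv ℝ (fun y => ω y ((fun _ => v) y)) x := rfl
  rw [this, h]
  simp

/-- Cartan's formula ingredient: if ω(e) ≡ 0 then
    e·(ω(Y)) - ω([e,Y]) = dω(e,Y). -/
lemma lie_oneform (ω : E3 → (E3 →L[ℝ] ℝ)) (e Y : E3 → E3)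
    (hω : Differentiable ℝ ω) (he : Differentiable ℝ e) (hY : Differentiable ℝ Y)
    (hze : ∀ y, ω y (e y) = 0) (x : E3) :
    fderiv ℝ (fun y => ω y (Y y)) x (e x) - ω x (brkt e Y x)
      = dOne ω x (e x) (Y x) := by
  have h1 : fderiv ℝ (fun y => ω y (Y y)) x (e x)
      = ω x (fderiv ℝ Y x (e x)) + fderiv ℝ ω x (e x) (Y x) := by
    rw [fderiv_clm_apply (hω x) (hY x)]; simp
  have h2 : (0 : ℝ) = ω x (fderiv ℝ e x (Y x)) + fderiv ℝ ω x (Y x) (e x) := by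
    have hz : (fun y => ω y (e y)) = fun _ => (0 : ℝ) := funext hze
    have := fderiv_clm_apply (hω x) (he x)
    calc (0 : ℝ) = fderiv ℝ (fun y => ω y (e y)) x (Y x) := by rw [hz]; simp
      _ = ω x (fderiv ℝ e x (Y x)) + fderiv ℝ ω x (Y x) (e x) := by rw [this]; simp
  have h3 : ω x (brkt e Y x)
      = ω x (fderiv ℝ Y x (e x)) - ω x (fderiv ℝ e x (Y x)) := by
    simp [brkt]
  rw [dOne, fderiv_apply_const ω hω, fderiv_apply_const ω hω, h1, h3]
  linarith

/-- for an (I,J,1)-generalized Finsler structure with dual frame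
`(ê₁,ê₂,ê₃)`, the Lie derivative along `ê₂` of the symmetric quadratic form
`(ω¹)² + (ω³)²` vanishes: for all vector fields Y, Z,
`ê₂·Q(Y,Z) - Q([ê₂,Y],Z) - Q(Y,[ê₂,Z]) = 0`, where
`Q(u,v) = ω¹(u)ω¹(v) + ω³(u)ω³(v)`. -/
theorem stmt_7
    (ω1 ω2 ω3 : E3 → (E3 →L[ℝ] ℝ)) (e1 e2 e3 : E3 → E3)
    (I J : E3 → ℝ)
    (hω1 : ContDiff ℝ (⊤ : ℕ∞) ω1) (hω2 : ContDiff ℝ (⊤ : ℕ∞) ω2) (hω3 : ContDiff ℝ (⊤ : ℕ∞) ω3)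
    (he1 : ContDiff ℝ (⊤ : ℕ∞) e1) (he2 : ContDiff ℝ (⊤ : ℕ∞) e2) (he3 : ContDiff ℝ (⊤ : ℕ∞) e3)
    (hI : ContDiff ℝ (⊤ : ℕ∞) I) (hJ : ContDiff ℝ (⊤ : ℕ∞) J)
    (hdual : ∀ x, ω1 x (e1 x) = 1 ∧ ω1 x (e2 x) = 0 ∧ ω1 x (e3 x) = 0 ∧
      ω2 x (e1 x) = 0 ∧ ω2 x (e2 x) = 1 ∧ ω2 x (e3 x) = 0 ∧
      ω3 x (e1 x) = 0 ∧ ω3 x (e2 x) = 0 ∧ ω3 x (e3 x) = 1)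
    (hs1 : ∀ x u v, dOne ω1 x u v = -(I x) * wdg ω1 ω3 x u v + wdg ω2 ω3 x u v)
    (hs2 : ∀ x u v, dOne ω2 x u v = - wdg ω1 ω3 x u v)
    (hs3 : ∀ x u v, dOne ω3 x u v = wdg ω1 ω2 x u v - J x * wdg ω1 ω3 x u v)
    (hB1 : ∀ x, J x = fderiv ℝ I x (e2 x))
    (hB2 : ∀ x, I x + fderiv ℝ J x (e2 x) = 0) :
    ∀ Y Z : E3 → E3, ContDiff ℝ (⊤ : ℕ∞) Y → ContDiff ℝ (⊤ : ℕ∞) Z → ∀ x,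
      fderiv ℝ (fun y => ω1 y (Y y) * ω1 y (Z y) + ω3 y (Y y) * ω3 y (Z y)) x (e2 x)
        - (ω1 x (brkt e2 Y x) * ω1 x (Z x) + ω3 x (brkt e2 Y x) * ω3 x (Z x))
        - (ω1 x (Y x) * ω1 x (brkt e2 Z x) + ω3 x (Y x) * ω3 x (brkt e2 Z x))
        = 0 := by
  intro Y Z hY hZ x
  have dω1 := hω1.differentiable (by simp)
  have dω3 := hω3.differentiable (by simp)
  have de2 := he2.differentiable (by simp)
  have dY := hY.differentiable (by simp)
  have dZ := hZ.differentiable (by simp)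
  obtain ⟨h11, h12, h13, h21, h22, h23, h31, h32, h33⟩ := hdual x
  -- differentiability of the scalar functions
  have dA : DifferentiableAt ℝ (fun y => ω1 y (Y y)) x := (dω1 x).clm_apply (dY x)
  have dB : DifferentiableAt ℝ (fun y => ω1 y (Z y)) x := (dω1 x).clm_apply (dZ x)
  have dC : DifferentiableAt ℝ (fun y => ω3 y (Y y)) x := (dω3 x).clm_apply (dY x)
  have dD : DifferentiableAt ℝ (fun y => ω3 y (Z y)) x := (dω3 x).clm_apply (dZ x)
  have hF : fderiv ℝ (fun y => ω1 y (Y y) * ω1 y (Z y) + ω3 y (Y y) * ω3 y (Z y)) x (e2 x)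
      = fderiv ℝ (fun y => ω1 y (Y y)) x (e2 x) * ω1 x (Z x)
        + ω1 x (Y x) * fderiv ℝ (fun y => ω1 y (Z y)) x (e2 x)
        + fderiv ℝ (fun y => ω3 y (Y y)) x (e2 x) * ω3 x (Z x)
        + ω3 x (Y x) * fderiv ℝ (fun y => ω3 y (Z y)) x (e2 x) := by
    rw [fderiv_fun_add (dA.fun_mul dB) (dC.fun_mul dD), fderiv_fun_mul dA dB, fderiv_fun_mul dC dD]
    simp; ring
  have L1Y := lie_oneform ω1 e2 Y dω1 de2 dY (fun y => (hdual y).2.1) x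
  have L1Z := lie_oneform ω1 e2 Z dω1 de2 dZ (fun y => (hdual y).2.1) x
  have L3Y := lie_oneform ω3 e2 Y dω3 de2 dY (fun y => (hdual y).2.2.2.2.2.2.2.1) x
  have L3Z := lie_oneform ω3 e2 Z dω3 de2 dZ (fun y => (hdual y).2.2.2.2.2.2.2.1) x
  have E1Y : dOne ω1 x (e2 x) (Y x) = ω3 x (Y x) := by
    rw [hs1 x (e2 x) (Y x)]; simp [wdg, h12, h22, h32]
  have E1Z : dOne ω1 x (e2 x) (Z x) = ω3 x (Z x) := by
    rw [hs1 x (e2 x) (Z x)]; simp [wdg, h12, h22, h32]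
  have E3Y : dOne ω3 x (e2 x) (Y x) = -(ω1 x (Y x)) := by
    rw [hs3 x (e2 x) (Y x)]; simp [wdg, h12, h22, h32]
  have E3Z : dOne ω3 x (e2 x) (Z x) = -(ω1 x (Z x)) := by
    rw [hs3 x (e2 x) (Z x)]; simp [wdg, h12, h22, h32]
  rw [hF]
  linear_combination (ω1 x (Z x)) * (L1Y.trans E1Y) + (ω1 x (Y x)) * (L1Z.trans E1Z)
    + (ω3 x (Z x)) * (L3Y.trans E3Y) + (ω3 x (Y x)) * (L3Z.trans E3Z)
end
end

section
/- For an (I,J,1)-generalized Finsler structure, the one-form I ω¹ + J ω³ is invariant under the flow of ê₂, i.e. L_{ê₂}(I ω¹ + J ω³) = 0, and the function I² + J² satisfies ê₂(I² + J²) = 0. -/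
noncomputable section

lemma fd_apply (ω : E3 → (E3 →L[ℝ] ℝ)) (Y : E3 → E3)
    (hω : ContDiff ℝ (⊤ : ℕ∞) ω) (hY : ContDiff ℝ (⊤ : ℕ∞) Y) (x u : E3) :
    fderiv ℝ (fun y => ω y (Y y)) x u
      = (fderiv ℝ ω x u) (Y x) + ω x (fderiv ℝ Y x u) := by
  have h := ((hω.differentiable (by simp) x).hasFDerivAt.clm_apply
    (hY.differentiable (by simp) x).hasFDerivAt).fderiv
  rw [h]
  simp [ContinuousLinearMap.add_apply, ContinuousLinearMap.comp_apply,
    ContinuousLinearMap.flip_apply]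
  ring

lemma fd_apply_const (ω : E3 → (E3 →L[ℝ] ℝ)) (hω : ContDiff ℝ (⊤ : ℕ∞) ω) (x u v : E3) :
    fderiv ℝ (fun y => ω y v) x u = (fderiv ℝ ω x u) v := by
  have := fd_apply ω (fun _ => v) hω contDiff_const x u
  simpa using this

lemma fd_dual (ω : E3 → (E3 →L[ℝ] ℝ)) (e : E3 → E3) (c : ℝ)
    (hω : ContDiff ℝ (⊤ : ℕ∞) ω) (he : ContDiff ℝ (⊤ : ℕ∞) e)
    (hconst : ∀ y, ω y (e y) = c) (x w : E3) :
    (fderiv ℝ ω x w) (e x) + ω x (fderiv ℝ e x w) = 0 := by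
  have h := fd_apply ω e hω he x w
  have h2 : (fun y => ω y (e y)) = fun _ => c := funext hconst
  rw [h2, fderiv_fun_const] at h
  simpa using h.symm

lemma fd_mul (f : E3 → ℝ) (ω : E3 → (E3 →L[ℝ] ℝ)) (Y : E3 → E3)
    (hf : ContDiff ℝ (⊤ : ℕ∞) f) (hω : ContDiff ℝ (⊤ : ℕ∞) ω) (hY : ContDiff ℝ (⊤ : ℕ∞) Y) (x u : E3) :
    fderiv ℝ (fun y => f y * ω y (Y y)) x u
      = fderiv ℝ f x u * ω x (Y x)
        + f x * ((fderiv ℝ ω x u) (Y x) + ω x (fderiv ℝ Y x u)) := by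
  have hg : HasFDerivAt (fun y => ω y (Y y))
      ((ω x).comp (fderiv ℝ Y x) + (fderiv ℝ ω x).flip (Y x)) x :=
    (hω.differentiable (by simp) x).hasFDerivAt.clm_apply
      (hY.differentiable (by simp) x).hasFDerivAt
  have h := ((hf.differentiable (by simp) x).hasFDerivAt.fun_mul hg).fderiv
  rw [h]
  simp [ContinuousLinearMap.add_apply, ContinuousLinearMap.comp_apply,
    ContinuousLinearMap.flip_apply]
  ring

/-- for an (I,J,1)-generalized Finsler structure, the one-form
`I ω¹ + J ω³` is invariant under the flow of `ê₂`:
`ê₂·((Iω¹+Jω³)(Y)) - (Iω¹+Jω³)([ê₂,Y]) = 0` for every vector field Y, and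
the function `I² + J²` satisfies `ê₂(I² + J²) = 0`. -/
theorem stmt_8
    (ω1 ω2 ω3 : E3 → (E3 →L[ℝ] ℝ)) (e1 e2 e3 : E3 → E3)
    (I J : E3 → ℝ)
    (hω1 : ContDiff ℝ (⊤ : ℕ∞) ω1) (hω2 : ContDiff ℝ (⊤ : ℕ∞) ω2) (hω3 : ContDiff ℝ (⊤ : ℕ∞) ω3)
    (he1 : ContDiff ℝ (⊤ : ℕ∞) e1) (he2 : ContDiff ℝ (⊤ : ℕ∞) e2) (he3 : ContDiff ℝ (⊤ : ℕ∞) e3)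
    (hI : ContDiff ℝ (⊤ : ℕ∞) I) (hJ : ContDiff ℝ (⊤ : ℕ∞) J)
    (hdual : ∀ x, ω1 x (e1 x) = 1 ∧ ω1 x (e2 x) = 0 ∧ ω1 x (e3 x) = 0 ∧
      ω2 x (e1 x) = 0 ∧ ω2 x (e2 x) = 1 ∧ ω2 x (e3 x) = 0 ∧
      ω3 x (e1 x) = 0 ∧ ω3 x (e2 x) = 0 ∧ ω3 x (e3 x) = 1)
    (hs1 : ∀ x u v, dOne ω1 x u v = -(I x) * wdg ω1 ω3 x u v + wdg ω2 ω3 x u v)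
    (hs2 : ∀ x u v, dOne ω2 x u v = - wdg ω1 ω3 x u v)
    (hs3 : ∀ x u v, dOne ω3 x u v = wdg ω1 ω2 x u v - J x * wdg ω1 ω3 x u v)
    (hB1 : ∀ x, J x = fderiv ℝ I x (e2 x))
    (hB2 : ∀ x, I x + fderiv ℝ J x (e2 x) = 0) :
    (∀ Y : E3 → E3, ContDiff ℝ (⊤ : ℕ∞) Y → ∀ x,
      fderiv ℝ (fun y => I y * ω1 y (Y y) + J y * ω3 y (Y y)) x (e2 x)
        - (I x * ω1 x (brkt e2 Y x) + J x * ω3 x (brkt e2 Y x)) = 0) ∧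
    (∀ x, fderiv ℝ (fun y => (I y)^2 + (J y)^2) x (e2 x) = 0) := by
  constructor
  · intro Y hY x
    set u := e2 x with hu
    set v := Y x with hv
    -- split the derivative of the sum
    have d1 : DifferentiableAt ℝ (fun y => I y * ω1 y (Y y)) x :=
      (hI.differentiable (by simp) x).mul
        ((hω1.differentiable (by simp) x).clm_apply (hY.differentiable (by simp) x))
    have d2 : DifferentiableAt ℝ (fun y => J y * ω3 y (Y y)) x :=
      (hJ.differentiable (by simp) x).mul
        ((hω3.differentiable (by simp) x).clm_apply (hY.differentiable (by simp) x))
    have hsum : fderiv ℝ (fun y => I y * ω1 y (Y y) + J y * ω3 y (Y y)) x u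
        = fderiv ℝ (fun y => I y * ω1 y (Y y)) x u
          + fderiv ℝ (fun y => J y * ω3 y (Y y)) x u := by
      rw [fderiv_fun_add d1 d2]; rfl
    rw [hsum, fd_mul I ω1 Y hI hω1 hY x u, fd_mul J ω3 Y hJ hω3 hY x u]
    -- bracket
    have hbr : brkt e2 Y x = fderiv ℝ Y x u - fderiv ℝ e2 x v := rfl
    rw [hbr, map_sub, map_sub]
    -- duality values at x
    obtain ⟨_, h12, _, _, _, _, _, h32, _⟩ := hdual x
    -- structure equations in direction (u, v)
    have hd1 : dOne ω1 x u v = (fderiv ℝ ω1 x u) v - (fderiv ℝ ω1 x v) u := by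
      unfold dOne; rw [fd_apply_const ω1 hω1, fd_apply_const ω1 hω1]
    have hd3 : dOne ω3 x u v = (fderiv ℝ ω3 x u) v - (fderiv ℝ ω3 x v) u := by
      unfold dOne; rw [fd_apply_const ω3 hω3, fd_apply_const ω3 hω3]
    have hs1' := hs1 x u v
    have hs3' := hs3 x u v
    rw [hd1] at hs1'
    rw [hd3] at hs3'
    unfold wdg at hs1' hs3'
    rw [← hu] at h12 h32
    -- duality differentiated in direction v
    have hdu1 := fd_dual ω1 e2 0 hω1 he2 (fun y => (hdual y).2.1) x v
    have hdu3 := fd_dual ω3 e2 0 hω3 he2 (fun y => (hdual y).2.2.2.2.2.2.2.1) x v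
    rw [← hu] at hdu1 hdu3
    have hB1' := hB1 x
    have hB2' := hB2 x
    rw [← hu] at hB1' hB2'
    -- key combined identities
    have k1 : (fderiv ℝ ω1 x u) v + ω1 x (fderiv ℝ e2 x v) = ω3 x v := by
      rw [h12, h32] at hs1'
      have h22 := (hdual x).2.2.2.2.1
      rw [← hu] at h22
      rw [h22] at hs1'
      linarith [hs1', hdu1]
    have k3 : (fderiv ℝ ω3 x u) v + ω3 x (fderiv ℝ e2 x v) = -(ω1 x v) := by
      rw [h12, h32] at hs3'
      have h22 := (hdual x).2.2.2.2.1
      rw [← hu] at h22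
      rw [h22] at hs3'
      linarith [hs3', hdu3]
    have hY2 := hY
    linear_combination (ω1 x v) * hB1'.symm + (ω3 x v) * hB2' + (I x) * k1 + (J x) * k3
  · intro x
    have hI' := (hI.differentiable (by simp) x).hasFDerivAt
    have hJ' := (hJ.differentiable (by simp) x).hasFDerivAt
    have h : fderiv ℝ (fun y => (I y)^2 + (J y)^2) x
        = fderiv ℝ (fun y => I y * I y + J y * J y) x := by
      congr 1; funext y; ring
    have h2 := (((hI'.fun_mul hI').fun_add (hJ'.fun_mul hJ')).fderiv)
    rw [h, h2]
    have hB1' := hB1 x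
    have hB2' := hB2 x
    simp only [ContinuousLinearMap.add_apply, ContinuousLinearMap.smul_apply, smul_eq_mul]
    linear_combination (-2*I x) * hB1' + (2*J x) * hB2'
end
end

section
/- Let (ω¹,ω²,ω³) be an (I,0,K)-generalized Finsler structure on a 3-manifold and m a nowhere vanishing smooth function satisfying m_{ω1} = 0 and m² = K. Then the Lie derivative along ê₁ (dual to ω¹) of the quadratic form (m ω²)² + (ω³)² vanishes. -/
noncomputable section

lemma fderiv_eval (ω : E3 → (E3 →L[ℝ] ℝ)) {x : E3} (hω : DifferentiableAt ℝ ω x) (u v : E3) :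
    fderiv ℝ (fun y => ω y v) x u = (fderiv ℝ ω x u) v := by
  rw [show (fun y => ω y v) = (fun y => ω y ((fun _ : E3 => v) y)) from rfl,
    fderiv_clm_apply hω (differentiableAt_const v)]
  simp

lemma key (ω : E3 → (E3 →L[ℝ] ℝ)) (e1 Y : E3 → E3)
    (hω : ContDiff ℝ (⊤ : ℕ∞) ω) (he1 : ContDiff ℝ (⊤ : ℕ∞) e1) (hY : ContDiff ℝ (⊤ : ℕ∞) Y)
    (h0 : ∀ y, ω y (e1 y) = 0) (x : E3) :
    fderiv ℝ (fun y => ω y (Y y)) x (e1 x)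
      = ω x (brkt e1 Y x) + dOne ω x (e1 x) (Y x) := by
  have hωd : DifferentiableAt ℝ ω x := hω.differentiable (by simp) x
  have hYd : DifferentiableAt ℝ Y x := hY.differentiable (by simp) x
  have he1d : DifferentiableAt ℝ e1 x := he1.differentiable (by simp) x
  have h1 : fderiv ℝ (fun y => ω y (Y y)) x (e1 x)
      = ω x (fderiv ℝ Y x (e1 x)) + (fderiv ℝ ω x (e1 x)) (Y x) := by
    rw [fderiv_clm_apply hωd hYd]; simp
  have h2 : ω x (fderiv ℝ e1 x (Y x)) + (fderiv ℝ ω x (Y x)) (e1 x) = 0 := by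
    have : fderiv ℝ (fun y => ω y (e1 y)) x (Y x)
        = ω x (fderiv ℝ e1 x (Y x)) + (fderiv ℝ ω x (Y x)) (e1 x) := by
      rw [fderiv_clm_apply hωd he1d]; simp
    rw [← this, show (fun y => ω y (e1 y)) = (fun _ : E3 => (0:ℝ)) from funext h0]
    simp
  rw [h1, brkt, dOne, fderiv_eval ω hωd, fderiv_eval ω hωd, map_sub]
  linarith

/-- for an (I,0,K)-generalized Finsler structure and a nowhere
vanishing m with `m_{ω1} = 0`, `m² = K`, the Lie derivative along `ê₁` of
the quadratic form `(mω²)² + (ω³)²` vanishes: for all vector fields Y, Z,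
`ê₁·Q(Y,Z) - Q([ê₁,Y],Z) - Q(Y,[ê₁,Z]) = 0`, where
`Q(u,v) = m²ω²(u)ω²(v) + ω³(u)ω³(v)`. -/
theorem stmt_11
    (ω1 ω2 ω3 : E3 → (E3 →L[ℝ] ℝ)) (e1 e2 e3 : E3 → E3)
    (I K : E3 → ℝ)
    (hω1 : ContDiff ℝ (⊤ : ℕ∞) ω1) (hω2 : ContDiff ℝ (⊤ : ℕ∞) ω2) (hω3 : ContDiff ℝ (⊤ : ℕ∞) ω3)
    (he1 : ContDiff ℝ (⊤ : ℕ∞) e1) (he2 : ContDiff ℝ (⊤ : ℕ∞) e2) (he3 : ContDiff ℝ (⊤ : ℕ∞) e3)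
    (hI : ContDiff ℝ (⊤ : ℕ∞) I) (hK : ContDiff ℝ (⊤ : ℕ∞) K)
    (hdual : ∀ x, ω1 x (e1 x) = 1 ∧ ω1 x (e2 x) = 0 ∧ ω1 x (e3 x) = 0 ∧
      ω2 x (e1 x) = 0 ∧ ω2 x (e2 x) = 1 ∧ ω2 x (e3 x) = 0 ∧
      ω3 x (e1 x) = 0 ∧ ω3 x (e2 x) = 0 ∧ ω3 x (e3 x) = 1)
    (hs1 : ∀ x u v, dOne ω1 x u v = -(I x) * wdg ω1 ω3 x u v + wdg ω2 ω3 x u v)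
    (hs2 : ∀ x u v, dOne ω2 x u v = - wdg ω1 ω3 x u v)
    (hs3 : ∀ x u v, dOne ω3 x u v = K x * wdg ω1 ω2 x u v)
    (m : E3 → ℝ) (hm : ContDiff ℝ (⊤ : ℕ∞) m) (hmne : ∀ x, m x ≠ 0)
    (hm1 : ∀ x, fderiv ℝ m x (e1 x) = 0)
    (hmK : ∀ x, (m x)^2 = K x) :
    ∀ Y Z : E3 → E3, ContDiff ℝ (⊤ : ℕ∞) Y → ContDiff ℝ (⊤ : ℕ∞) Z → ∀ x,
      fderiv ℝ (fun y => (m y)^2 * (ω2 y (Y y) * ω2 y (Z y))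
          + ω3 y (Y y) * ω3 y (Z y)) x (e1 x)
        - ((m x)^2 * (ω2 x (brkt e1 Y x) * ω2 x (Z x))
          + ω3 x (brkt e1 Y x) * ω3 x (Z x))
        - ((m x)^2 * (ω2 x (Y x) * ω2 x (brkt e1 Z x))
          + ω3 x (Y x) * ω3 x (brkt e1 Z x)) = 0 := by
  intro Y Z hY hZ x
  obtain ⟨h11, h12, h13, h21, h22, h23, h31, h32, h33⟩ := hdual x
  have h20 : ∀ y, ω2 y (e1 y) = 0 := fun y => (hdual y).2.2.2.1
  have h30 : ∀ y, ω3 y (e1 y) = 0 := fun y => (hdual y).2.2.2.2.2.2.1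
  have k2Y := key ω2 e1 Y hω2 he1 hY h20 x
  have k2Z := key ω2 e1 Z hω2 he1 hZ h20 x
  have k3Y := key ω3 e1 Y hω3 he1 hY h30 x
  have k3Z := key ω3 e1 Z hω3 he1 hZ h30 x
  rw [hs2 x, hs3 x] at *
  simp only [wdg, h11, h31, h21] at k2Y k2Z k3Y k3Z
  have dm : DifferentiableAt ℝ m x := hm.differentiable (by simp) x
  have d2Y : DifferentiableAt ℝ (fun y => ω2 y (Y y)) x :=
    (hω2.differentiable (by simp) x).clm_apply (hY.differentiable (by simp) x)
  have d2Z : DifferentiableAt ℝ (fun y => ω2 y (Z y)) x :=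
    (hω2.differentiable (by simp) x).clm_apply (hZ.differentiable (by simp) x)
  have d3Y : DifferentiableAt ℝ (fun y => ω3 y (Y y)) x :=
    (hω3.differentiable (by simp) x).clm_apply (hY.differentiable (by simp) x)
  have d3Z : DifferentiableAt ℝ (fun y => ω3 y (Z y)) x :=
    (hω3.differentiable (by simp) x).clm_apply (hZ.differentiable (by simp) x)
  have dm2 : DifferentiableAt ℝ (fun y => (m y)^2) x := dm.pow 2
  have hμ : fderiv ℝ (fun y => (m y)^2) x (e1 x) = 0 := by
    rw [show (fun y => (m y)^2) = (fun y => m y * m y) from funext fun y => sq (m y),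
      fderiv_fun_mul dm dm]
    simp [hm1 x]
  have hsplit : fderiv ℝ (fun y => (m y)^2 * (ω2 y (Y y) * ω2 y (Z y))
      + ω3 y (Y y) * ω3 y (Z y)) x (e1 x)
      = fderiv ℝ (fun y => (m y)^2) x (e1 x) * (ω2 x (Y x) * ω2 x (Z x))
        + (m x)^2 * (fderiv ℝ (fun y => ω2 y (Y y)) x (e1 x) * ω2 x (Z x)
          + ω2 x (Y x) * fderiv ℝ (fun y => ω2 y (Z y)) x (e1 x))
        + (fderiv ℝ (fun y => ω3 y (Y y)) x (e1 x) * ω3 x (Z x)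
          + ω3 x (Y x) * fderiv ℝ (fun y => ω3 y (Z y)) x (e1 x)) := by
    rw [fderiv_fun_add (dm2.fun_mul (d2Y.fun_mul d2Z)) (d3Y.fun_mul d3Z)]
    rw [ContinuousLinearMap.add_apply, fderiv_fun_mul dm2 (d2Y.fun_mul d2Z),
      fderiv_fun_mul d2Y d2Z, fderiv_fun_mul d3Y d3Z]
    simp only [ContinuousLinearMap.add_apply, ContinuousLinearMap.smul_apply, smul_eq_mul]
    ring
  rw [hsplit, hμ, k2Y, k2Z, k3Y, k3Z, ← hmK x]
  ring
end
end

section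
/- Let (ω¹,ω²,ω³) be an (I,0,K)-generalized Finsler structure and m nowhere vanishing with m_{ω1} = 0 and m² = K. Then η¹ := m ω², η² := ω³, η³ := m ω¹ + m_{ω3} ω² form an R-Cartan structure (dη¹ = η²∧η³, dη² = -η¹∧η³, dη³ = R η¹∧η²) with structure function R = 1 - m_{ω33}/m. -/
noncomputable section

lemma apply_smooth {ω : E3 → (E3 →L[ℝ] ℝ)} (hω : ContDiff ℝ (⊤ : ℕ∞) ω) (v : E3) :
    ContDiff ℝ (⊤ : ℕ∞) (fun y => ω y v) := hω.clm_apply contDiff_const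

lemma sym2 {f : E3 → ℝ} (hf : ContDiff ℝ (⊤ : ℕ∞) f) (x u v : E3) :
    fderiv ℝ (fun y => fderiv ℝ f y v) x u = fderiv ℝ (fun y => fderiv ℝ f y u) x v := by
  have hf' : ContDiff ℝ (⊤ : ℕ∞) (fderiv ℝ f) := hf.fderiv_right (by simp)
  have h : ∀ w : E3, fderiv ℝ (fun y => fderiv ℝ f y w) x
      = (fderiv ℝ (fderiv ℝ f) x).flip w := by
    intro w
    have := fderiv_clm_apply (𝕜 := ℝ) (c := fderiv ℝ f) (u := fun _ => w)
      (hf'.differentiable (by simp) x) (differentiableAt_const w)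
    simpa using this
  rw [h, h]
  exact (hf.contDiffAt.isSymmSndFDerivAt (by rw [minSmoothness_of_isRCLikeNormedField]; exact WithTop.coe_le_coe.mpr (le_top : (2 : ℕ∞) ≤ ⊤))) u v

lemma dOne_smul {f : E3 → ℝ} {ω : E3 → (E3 →L[ℝ] ℝ)} (hf : ContDiff ℝ (⊤ : ℕ∞) f)
    (hω : ContDiff ℝ (⊤ : ℕ∞) ω) (x u v : E3) :
    dOne (fun y => f y • ω y) x u v
      = fderiv ℝ f x u * ω x v - fderiv ℝ f x v * ω x u + f x * dOne ω x u v := by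
  have key : ∀ a b : E3, fderiv ℝ (fun y => (f y • ω y) a) x b
      = f x * fderiv ℝ (fun y => ω y a) x b + ω x a * fderiv ℝ f x b := by
    intro a b
    have h1 : (fun y => (f y • ω y) a) = fun y => f y * ω y a := by
      funext y; simp
    rw [h1, fderiv_fun_mul (hf.differentiable (by simp) x)
      ((apply_smooth hω a).differentiable (by simp) x)]
    simp only [ContinuousLinearMap.add_apply, ContinuousLinearMap.smul_apply, smul_eq_mul]
  simp only [dOne, key]; ring

lemma dOne_add {η τ : E3 → (E3 →L[ℝ] ℝ)} (hη : ContDiff ℝ (⊤ : ℕ∞) η) (hτ : ContDiff ℝ (⊤ : ℕ∞) τ)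
    (x u v : E3) :
    dOne (fun y => η y + τ y) x u v = dOne η x u v + dOne τ x u v := by
  have key : ∀ a b : E3, fderiv ℝ (fun y => (η y + τ y) a) x b
      = fderiv ℝ (fun y => η y a) x b + fderiv ℝ (fun y => τ y a) x b := by
    intro a b
    have h1 : (fun y => (η y + τ y) a) = fun y => η y a + τ y a := by funext y; simp
    rw [h1, fderiv_fun_add ((apply_smooth hη a).differentiable (by simp) x)
      ((apply_smooth hτ a).differentiable (by simp) x)]
    simp
  simp only [dOne, key]; ring

lemma cyclic {ω : E3 → (E3 →L[ℝ] ℝ)} (hω : ContDiff ℝ (⊤ : ℕ∞) ω) (x u v w : E3) :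
    fderiv ℝ (fun y => dOne ω y v w) x u + fderiv ℝ (fun y => dOne ω y w u) x v
      + fderiv ℝ (fun y => dOne ω y u v) x w = 0 := by
  have hd : ∀ a : E3, ContDiff ℝ (⊤ : ℕ∞) (fun y => fderiv ℝ (fun z => ω z a) y) := by
    intro a; exact (apply_smooth hω a).fderiv_right (by simp)
  have hda : ∀ a b : E3, ContDiff ℝ (⊤ : ℕ∞) (fun y => fderiv ℝ (fun z => ω z a) y b) := by
    intro a b; exact (hd a).clm_apply contDiff_const
  have key : ∀ a b c : E3, fderiv ℝ (fun y => dOne ω y b c) x a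
      = fderiv ℝ (fun y => fderiv ℝ (fun z => ω z c) y b) x a
        - fderiv ℝ (fun y => fderiv ℝ (fun z => ω z b) y c) x a := by
    intro a b c
    have : (fun y => dOne ω y b c)
        = fun y => fderiv ℝ (fun z => ω z c) y b - fderiv ℝ (fun z => ω z b) y c := rfl
    rw [this, fderiv_fun_sub ((hda c b).differentiable (by simp) x)
      ((hda b c).differentiable (by simp) x)]
    simp
  rw [key, key, key,
    sym2 (apply_smooth hω w) x u v, sym2 (apply_smooth hω u) x v w,
    sym2 (apply_smooth hω v) x w u]
  ring


lemma fderiv_mul_apply {f g : E3 → ℝ} (hf : ContDiff ℝ (⊤ : ℕ∞) f) (hg : ContDiff ℝ (⊤ : ℕ∞) g)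
    (x u : E3) :
    fderiv ℝ (fun y => f y * g y) x u = f x * fderiv ℝ g x u + g x * fderiv ℝ f x u := by
  rw [fderiv_fun_mul (hf.differentiable (by simp) x) (hg.differentiable (by simp) x)]
  simp only [ContinuousLinearMap.add_apply, ContinuousLinearMap.smul_apply, smul_eq_mul]

lemma wdg_smooth {η τ : E3 → (E3 →L[ℝ] ℝ)} (hη : ContDiff ℝ (⊤ : ℕ∞) η) (hτ : ContDiff ℝ (⊤ : ℕ∞) τ)
    (v w : E3) : ContDiff ℝ (⊤ : ℕ∞) (fun y => wdg η τ y v w) :=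
  ((apply_smooth hη v).mul (apply_smooth hτ w)).sub
    ((apply_smooth hη w).mul (apply_smooth hτ v))

lemma fderiv_wdg {η τ : E3 → (E3 →L[ℝ] ℝ)} (hη : ContDiff ℝ (⊤ : ℕ∞) η) (hτ : ContDiff ℝ (⊤ : ℕ∞) τ)
    (x u v w : E3) :
    fderiv ℝ (fun y => wdg η τ y v w) x u
      = fderiv ℝ (fun y => η y v) x u * τ x w + η x v * fderiv ℝ (fun y => τ y w) x u
        - (fderiv ℝ (fun y => η y w) x u * τ x v + η x w * fderiv ℝ (fun y => τ y v) x u) := by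
  have h : (fun y => wdg η τ y v w) = fun y => (fun y => η y v * τ y w) y - (fun y => η y w * τ y v) y := rfl
  rw [h, fderiv_fun_sub (((apply_smooth hη v).mul (apply_smooth hτ w)).differentiable (by simp) x)
    (((apply_smooth hη w).mul (apply_smooth hτ v)).differentiable (by simp) x)]
  simp only [ContinuousLinearMap.sub_apply]
  rw [fderiv_mul_apply (apply_smooth hη v) (apply_smooth hτ w),
    fderiv_mul_apply (apply_smooth hη w) (apply_smooth hτ v)]
  ring

lemma decomp (a b c : E3 →L[ℝ] ℝ) (E1 E2 E3' : E3)
    (h11 : a E1 = 1) (h12 : a E2 = 0) (h13 : a E3' = 0)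
    (h21 : b E1 = 0) (h22 : b E2 = 1) (h23 : b E3' = 0)
    (h31 : c E1 = 0) (h32 : c E2 = 0) (h33 : c E3' = 1) :
    ∀ u : E3, u = a u • E1 + b u • E2 + c u • E3' := by
  set L : E3 →ₗ[ℝ] ℝ × ℝ × ℝ :=
    LinearMap.prod a.toLinearMap (LinearMap.prod b.toLinearMap c.toLinearMap) with hL
  have hLap : ∀ u : E3, L u = (a u, b u, c u) := fun u => rfl
  have hsurj : Function.Surjective L := by
    rintro ⟨p, q, r⟩
    refine ⟨p • E1 + q • E2 + r • E3', ?_⟩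
    simp [hLap, map_add, map_smul, h11, h12, h13, h21, h22, h23, h31, h32, h33]
  have hfr : Module.finrank ℝ E3 = Module.finrank ℝ (ℝ × ℝ × ℝ) := by
    simp [finrank_euclideanSpace_fin]
  have hinj : Function.Injective L :=
    (LinearMap.injective_iff_surjective_of_finrank_eq_finrank hfr).2 hsurj
  intro u
  apply hinj
  simp [hLap, map_add, map_smul, h11, h12, h13, h21, h22, h23, h31, h32, h33]

/-- for an (I,0,K)-generalized Finsler structure and a nowhere
vanishing m with `m_{ω1} = 0`, `m² = K`, the coframe
`η¹ = mω²`, `η² = ω³`, `η³ = mω¹ + m_{ω3}ω²` is an R-Cartan structure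
with structure function `R = 1 - m_{ω33}/m`. -/
theorem stmt_12
    (ω1 ω2 ω3 : E3 → (E3 →L[ℝ] ℝ)) (e1 e2 e3 : E3 → E3)
    (I K : E3 → ℝ)
    (hω1 : ContDiff ℝ (⊤ : ℕ∞) ω1) (hω2 : ContDiff ℝ (⊤ : ℕ∞) ω2) (hω3 : ContDiff ℝ (⊤ : ℕ∞) ω3)
    (he1 : ContDiff ℝ (⊤ : ℕ∞) e1) (he2 : ContDiff ℝ (⊤ : ℕ∞) e2) (he3 : ContDiff ℝ (⊤ : ℕ∞) e3)
    (hI : ContDiff ℝ (⊤ : ℕ∞) I) (hK : ContDiff ℝ (⊤ : ℕ∞) K)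
    (hdual : ∀ x, ω1 x (e1 x) = 1 ∧ ω1 x (e2 x) = 0 ∧ ω1 x (e3 x) = 0 ∧
      ω2 x (e1 x) = 0 ∧ ω2 x (e2 x) = 1 ∧ ω2 x (e3 x) = 0 ∧
      ω3 x (e1 x) = 0 ∧ ω3 x (e2 x) = 0 ∧ ω3 x (e3 x) = 1)
    (hs1 : ∀ x u v, dOne ω1 x u v = -(I x) * wdg ω1 ω3 x u v + wdg ω2 ω3 x u v)
    (hs2 : ∀ x u v, dOne ω2 x u v = - wdg ω1 ω3 x u v)
    (hs3 : ∀ x u v, dOne ω3 x u v = K x * wdg ω1 ω2 x u v)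
    (m : E3 → ℝ) (hm : ContDiff ℝ (⊤ : ℕ∞) m) (hmne : ∀ x, m x ≠ 0)
    (hm1 : ∀ x, fderiv ℝ m x (e1 x) = 0)
    (hmK : ∀ x, (m x)^2 = K x) :
    (∀ x u v, dOne (fun y => m y • ω2 y) x u v
        = wdg ω3 (fun y => m y • ω1 y + (fderiv ℝ m y (e3 y)) • ω2 y) x u v) ∧
    (∀ x u v, dOne ω3 x u v
        = - wdg (fun y => m y • ω2 y)
            (fun y => m y • ω1 y + (fderiv ℝ m y (e3 y)) • ω2 y) x u v) ∧
    (∀ x u v, dOne (fun y => m y • ω1 y + (fderiv ℝ m y (e3 y)) • ω2 y) x u v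
        = (1 - fderiv ℝ (fun y => fderiv ℝ m y (e3 y)) x (e3 x) / m x)
          * wdg (fun y => m y • ω2 y) ω3 x u v) := by
  obtain ⟨d11, d12, d13, d21, d22, d23, d31, d32, d33⟩ :
      (∀ x, ω1 x (e1 x) = 1) ∧ (∀ x, ω1 x (e2 x) = 0) ∧ (∀ x, ω1 x (e3 x) = 0) ∧
      (∀ x, ω2 x (e1 x) = 0) ∧ (∀ x, ω2 x (e2 x) = 1) ∧ (∀ x, ω2 x (e3 x) = 0) ∧
      (∀ x, ω3 x (e1 x) = 0) ∧ (∀ x, ω3 x (e2 x) = 0) ∧ (∀ x, ω3 x (e3 x) = 1) := by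
    refine ⟨fun x => (hdual x).1, fun x => (hdual x).2.1, fun x => (hdual x).2.2.1,
      fun x => (hdual x).2.2.2.1, fun x => (hdual x).2.2.2.2.1, fun x => (hdual x).2.2.2.2.2.1,
      fun x => (hdual x).2.2.2.2.2.2.1, fun x => (hdual x).2.2.2.2.2.2.2.1,
      fun x => (hdual x).2.2.2.2.2.2.2.2⟩
  have hdm : ContDiff ℝ (⊤ : ℕ∞) (fderiv ℝ m) := hm.fderiv_right (by simp)
  have hm2 : ContDiff ℝ (⊤ : ℕ∞) (fun y => fderiv ℝ m y (e2 y)) := hdm.clm_apply he2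
  have hm3 : ContDiff ℝ (⊤ : ℕ∞) (fun y => fderiv ℝ m y (e3 y)) := hdm.clm_apply he3
  have hexp : ∀ (x : E3) (φ : E3 →L[ℝ] ℝ) (u : E3),
      φ u = φ (e1 x) * ω1 x u + φ (e2 x) * ω2 x u + φ (e3 x) * ω3 x u := by
    intro x φ u
    have hdc := decomp (ω1 x) (ω2 x) (ω3 x) (e1 x) (e2 x) (e3 x) (d11 x) (d12 x) (d13 x)
      (d21 x) (d22 x) (d23 x) (d31 x) (d32 x) (d33 x) u
    conv_lhs => rw [hdc]
    simp only [map_add, map_smul, smul_eq_mul]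
    ring
  have hA : ∀ x u, fderiv ℝ m x u
      = fderiv ℝ m x (e2 x) * ω2 x u + fderiv ℝ m x (e3 x) * ω3 x u := by
    intro x u
    rw [hexp x (fderiv ℝ m x) u, hm1 x]
    ring
  -- d(dm) = 0 expanded in the coframe
  have hBzero : ∀ x u v,
      fderiv ℝ (fun y => fderiv ℝ m y (e2 y)) x u * ω2 x v
        - fderiv ℝ (fun y => fderiv ℝ m y (e2 y)) x v * ω2 x u
        + fderiv ℝ m x (e2 x) * dOne ω2 x u v
      + (fderiv ℝ (fun y => fderiv ℝ m y (e3 y)) x u * ω3 x v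
        - fderiv ℝ (fun y => fderiv ℝ m y (e3 y)) x v * ω3 x u
        + fderiv ℝ m x (e3 x) * dOne ω3 x u v) = 0 := by
    intro x u v
    have hαeq : fderiv ℝ m
        = fun y => (fderiv ℝ m y (e2 y)) • ω2 y + (fderiv ℝ m y (e3 y)) • ω3 y := by
      funext y
      ext w
      simp only [ContinuousLinearMap.add_apply, ContinuousLinearMap.smul_apply, smul_eq_mul]
      exact hA y w
    have h0 : dOne (fderiv ℝ m) x u v = 0 := by
      unfold dOne
      rw [sym2 hm x u v]
      ring
    rw [hαeq] at h0
    rw [dOne_add (η := fun y => fderiv ℝ m y (e2 y) • ω2 y) (τ := fun y => fderiv ℝ m y (e3 y) • ω3 y)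
      (hm2.smul hω2) (hm3.smul hω3), dOne_smul hm2 hω2, dOne_smul hm3 hω3] at h0
    exact h0
  have hi : ∀ x, fderiv ℝ (fun y => fderiv ℝ m y (e3 y)) x (e1 x) = fderiv ℝ m x (e2 x) := by
    intro x
    have h := hBzero x (e1 x) (e3 x)
    rw [hs2, hs3] at h
    simp only [wdg, d11 x, d12 x, d13 x, d21 x, d22 x, d23 x, d31 x, d32 x, d33 x] at h
    ring_nf at h
    linarith
  -- Bianchi for the third structure equation: m x * I x + 2 m_{ω3} = 0
  have hii : ∀ x, m x * I x + 2 * fderiv ℝ m x (e3 x) = 0 := by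
    intro x
    have hc := cyclic hω3 x (e1 x) (e2 x) (e3 x)
    have hrw : ∀ v w : E3, (fun y => dOne ω3 y v w) = fun y => K y * wdg ω1 ω2 y v w :=
      fun v w => funext fun y => hs3 y v w
    rw [hrw, hrw, hrw] at hc
    have E : ∀ u v w : E3, fderiv ℝ (fun y => K y * wdg ω1 ω2 y v w) x u
        = fderiv ℝ K x u * wdg ω1 ω2 x v w
          + K x * (fderiv ℝ (fun y => ω1 y v) x u * ω2 x w
            + ω1 x v * fderiv ℝ (fun y => ω2 y w) x u
            - (fderiv ℝ (fun y => ω1 y w) x u * ω2 x v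
              + ω1 x w * fderiv ℝ (fun y => ω2 y v) x u)) := by
      intro u v w
      rw [fderiv_mul_apply hK (wdg_smooth hω1 hω2 v w), fderiv_wdg hω1 hω2]
      ring
    rw [E, E, E] at hc
    have hdK : ∀ u, fderiv ℝ K x u = 2 * (m x * fderiv ℝ m x u) := by
      intro u
      have hK2 : K = fun y => m y * m y := funext fun y => by rw [← hmK y]; ring
      rw [hK2, fderiv_mul_apply hm hm]
      ring
    have hA1 := hs1 x (e1 x) (e3 x)
    have hA2 := hs2 x (e2 x) (e3 x)
    unfold dOne wdg at hA1 hA2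
    simp only [wdg, hdK, hm1 x, d11 x, d12 x, d13 x, d21 x, d22 x, d23 x, d31 x, d32 x,
      d33 x] at hc hA1 hA2
    have hfac : m x * (m x * I x + 2 * fderiv ℝ m x (e3 x)) = 0 := by
      linear_combination hc + K x * hA1 + K x * hA2 + I x * hmK x
    rcases mul_eq_zero.1 hfac with h | h
    · exact absurd h (hmne x)
    · exact h
  refine ⟨?_, ?_, ?_⟩
  · intro x u v
    rw [dOne_smul hm hω2, hs2]
    simp only [wdg, ContinuousLinearMap.add_apply, ContinuousLinearMap.smul_apply, smul_eq_mul]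
    rw [hA x u, hA x v]
    ring
  · intro x u v
    rw [hs3]
    simp only [wdg, ContinuousLinearMap.add_apply, ContinuousLinearMap.smul_apply, smul_eq_mul]
    linear_combination (ω1 x u * ω2 x v - ω1 x v * ω2 x u) * (hmK x).symm
  · intro x u v
    have hadd := dOne_add (η := fun y => m y • ω1 y) (τ := fun y => fderiv ℝ m y (e3 y) • ω2 y)
      (hm.smul hω1) (hm3.smul hω2) x u v
    rw [hadd, dOne_smul hm hω1, dOne_smul hm3 hω2, hs1, hs2]
    have hexp3u := hexp x (fderiv ℝ (fun y => fderiv ℝ m y (e3 y)) x) u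
    have hexp3v := hexp x (fderiv ℝ (fun y => fderiv ℝ m y (e3 y)) x) v
    rw [hi x] at hexp3u hexp3v
    simp only [wdg, ContinuousLinearMap.add_apply, ContinuousLinearMap.smul_apply, smul_eq_mul]
    rw [hA x u, hA x v, hexp3u, hexp3v]
    have hm0 := hmne x
    field_simp
    linear_combination (ω3 x u * ω1 x v - ω3 x v * ω1 x u) * hii x
end
end
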